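/- Let g be a finite-dimensional semisimple Lie algebra over a field of characteristic zero, and let V be a finite-dimensional representation of g such that g acts nontrivially on V. Then V is not a trivial representation and in fact the category of subquotients of direct sums of copies of V is not stable under tensor products unless g acts trivially on V; equivalently: if every tensor power V^{⊗n} is a direct sum of subquotients of direct sums of copies of V, then g acts trivially on V. -/

import Mathlib

open scoped TensorProduct

section PiInstances

variable {k : Type*} [CommRing k] {g : Type*} [LieRing g] [LieAlgebra k g]
variable {V : Type*} [AddCommGroup V] [Module k V] [LieRingModule g V]

instance Pi.lieRingModule (m : ℕ) : LieRingModule g (Fin m → V) where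
  bracket x f := fun i => ⁅x, f i⁆
  add_lie x y f := by funext i; exact add_lie x y (f i)
  lie_add x f f' := by funext i; exact lie_add x (f i) (f' i)
  leibniz_lie x y f := by funext i; exact leibniz_lie x y (f i)

instance Pi.lieModule [LieModule k g V] (m : ℕ) : LieModule k g (Fin m → V) where
  smul_lie c x f := by funext i; exact LieModule.smul_lie c x (f i)
  lie_smul c x f := by funext i; exact LieModule.lie_smul c x (f i)

end PiInstances

/-- `W` is a subquotient of a finite direct sum of copies of `V` (as Lie modules over `g`). -/
def IsSubquotientOfCopies (k : Type*) [CommRing k] (g : Type*) [LieRing g] [LieAlgebra k g]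
    (V : Type*) [AddCommGroup V] [Module k V] [LieRingModule g V] [LieModule k g V]
    (W : Type*) [AddCommGroup W] [Module k W] [LieRingModule g W] [LieModule k g W] : Prop :=
  ∃ (m : ℕ) (p : LieSubmodule k g (Fin m → V)) (f : p →ₗ⁅k,g⁆ W), Function.Surjective f

section Glue

open Polynomial

variable {k : Type*} [Field k] {g : Type*} [LieRing g] [LieAlgebra k g]
variable {V : Type*} [AddCommGroup V] [Module k V] [LieRingModule g V] [LieModule k g V]

private lemma aeval_semiconj {M N : Type*} [AddCommGroup M] [Module k M] [AddCommGroup N]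
    [Module k N] (e : M →ₗ[k] N) (A : Module.End k M) (B : Module.End k N)
    (h : e ∘ₗ A = B ∘ₗ e) (q : k[X]) :
    e ∘ₗ (aeval A q) = (aeval B q) ∘ₗ e := by
  have hpow : ∀ n : ℕ, e ∘ₗ (A ^ n) = (B ^ n) ∘ₗ e := by
    intro n
    induction n with
    | zero => simp [Module.End.one_eq_id]
    | succ n ih =>
      calc e ∘ₗ (A ^ (n + 1)) = (e ∘ₗ (A ^ n)) ∘ₗ A := by rw [pow_succ]; rfl
        _ = ((B ^ n) ∘ₗ e) ∘ₗ A := by rw [ih]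
        _ = (B ^ n) ∘ₗ (e ∘ₗ A) := by rw [LinearMap.comp_assoc]
        _ = (B ^ n) ∘ₗ (B ∘ₗ e) := by rw [h]
        _ = (B ^ (n + 1)) ∘ₗ e := by rw [pow_succ]; rfl
  induction q using Polynomial.induction_on' with
  | add r s hr hs => simp only [map_add, LinearMap.add_comp, LinearMap.comp_add, hr, hs]
  | monomial n a =>
      rw [aeval_monomial, aeval_monomial, Algebra.algebraMap_eq_smul_one,
        Algebra.algebraMap_eq_smul_one, smul_mul_assoc, smul_mul_assoc, one_mul, one_mul,
        LinearMap.comp_smul, LinearMap.smul_comp, hpow]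

private lemma aeval_toEnd_subquotient
    {W : Type*} [AddCommGroup W] [Module k W] [LieRingModule g W] [LieModule k g W]
    (h : IsSubquotientOfCopies k g V W) (x : g) (q : k[X])
    (hq : aeval (LieModule.toEnd k g V x) q = 0) :
    aeval (LieModule.toEnd k g W x) q = 0 := by
  obtain ⟨m, N, f, hf⟩ := h
  have hpi : aeval (LieModule.toEnd k g (Fin m → V) x) q = 0 := by
    apply LinearMap.ext
    intro y
    funext i
    have hsc : (LinearMap.proj i : (Fin m → V) →ₗ[k] V) ∘ₗ LieModule.toEnd k g (Fin m → V) x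
        = LieModule.toEnd k g V x ∘ₗ (LinearMap.proj i) := rfl
    have h1 := LinearMap.congr_fun (aeval_semiconj (LinearMap.proj i) _ _ hsc q) y
    rw [hq] at h1
    simpa using h1
  have hsubN : aeval (LieModule.toEnd k g N x) q = 0 := by
    have hsc : (N : Submodule k (Fin m → V)).subtype ∘ₗ LieModule.toEnd k g N x
        = LieModule.toEnd k g (Fin m → V) x ∘ₗ (N : Submodule k (Fin m → V)).subtype := rfl
    have h2 := aeval_semiconj _ _ _ hsc q
    rw [hpi] at h2
    apply LinearMap.ext
    intro n
    have h3 := LinearMap.congr_fun h2 n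
    have h4 : (N : Submodule k (Fin m → V)).subtype ((aeval (LieModule.toEnd k g N x) q) n)
        = (N : Submodule k (Fin m → V)).subtype 0 := h3
    exact Submodule.injective_subtype _ h4
  have hsc : f.toLinearMap ∘ₗ LieModule.toEnd k g N x
      = LieModule.toEnd k g W x ∘ₗ f.toLinearMap := by
    apply LinearMap.ext
    intro n
    exact f.map_lie x n
  have h2 := aeval_semiconj _ _ _ hsc q
  rw [hsubN] at h2
  apply LinearMap.ext
  intro w
  obtain ⟨n, rfl⟩ := hf w
  have h3 := LinearMap.congr_fun h2.symm n
  simpa using h3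

private lemma isSubquotientOfCopies_self : IsSubquotientOfCopies k g V V := by
  refine ⟨1, ⊤, { toFun := fun y => (y : Fin 1 → V) 0,
                  map_add' := fun a b => rfl,
                  map_smul' := fun c a => rfl,
                  map_lie' := rfl }, fun v => ⟨⟨fun _ => v, LieSubmodule.mem_top _⟩, rfl⟩⟩

private lemma heart [CharZero k] {V : Type*} [AddCommGroup V] [Module k V] [FiniteDimensional k V]
    [Nontrivial V] (A : Module.End k V)
    (hC : aeval (TensorProduct.map A (1 : Module.End k V)
        + TensorProduct.map (1 : Module.End k V) A) (minpoly k A) = 0) : A = 0 := by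
  classical
  set p := minpoly k A with hp
  have hint : IsIntegral k A := ⟨A.charpoly, A.charpoly_monic, A.aeval_self_charpoly⟩
  have hmon : p.Monic := minpoly.monic hint
  have hpne : p ≠ 0 := hmon.ne_zero
  set d := p.natDegree with hd
  have hd1 : 1 ≤ d := minpoly.natDegree_pos hint
  set P := TensorProduct.map A (1 : Module.End k V) with hP
  set Q := TensorProduct.map (1 : Module.End k V) A with hQ
  have hmul : ∀ a b c e : Module.End k V,
      TensorProduct.map a c * TensorProduct.map b e = TensorProduct.map (a * b) (c * e) := by
    intro a b c e
    rw [Module.End.mul_eq_comp, Module.End.mul_eq_comp, Module.End.mul_eq_comp,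
      TensorProduct.map_comp]
  have hPp : ∀ n : ℕ, P ^ n = TensorProduct.map (A ^ n) 1 := by
    intro n
    induction n with
    | zero => simp [Module.End.one_eq_id, TensorProduct.map_id]
    | succ n ih => rw [pow_succ, ih, hP, hmul, ← pow_succ, one_mul]
  have hQp : ∀ n : ℕ, Q ^ n = TensorProduct.map 1 (A ^ n) := by
    intro n
    induction n with
    | zero => simp [Module.End.one_eq_id, TensorProduct.map_id]
    | succ n ih => rw [pow_succ, ih, hQ, hmul, ← pow_succ, one_mul]
  have hQP : ∀ a b : ℕ, Q ^ a * P ^ b = TensorProduct.map (A ^ b) (A ^ a) := by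
    intro a b
    rw [hPp, hQp, hmul, one_mul, mul_one]
  have hcomm : Commute Q P := by
    show Q * P = P * Q
    rw [hP, hQ, hmul, hmul]
    simp
  set C := P + Q with hCdef
  have hCn : ∀ n, C ^ n = ∑ j ∈ Finset.range (n + 1),
      ((n.choose j : k)) • TensorProduct.map (A ^ (n - j)) (A ^ j) := by
    intro n
    have hC' : C = Q + P := add_comm P Q
    rw [hC', hcomm.add_pow]
    refine Finset.sum_congr rfl fun j hj => ?_
    rw [hQP, ← (Nat.cast_commute (n.choose j)
        (TensorProduct.map (A ^ (n - j)) (A ^ j))).eq, ← nsmul_eq_mul,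
      Nat.cast_smul_eq_nsmul k]
  have hsum0 : (0 : Module.End k (V ⊗[k] V)) =
      ∑ n ∈ Finset.range (d + 1), ∑ j ∈ Finset.range (d + 1),
        (p.coeff n * (n.choose j : k)) • TensorProduct.map (A ^ (n - j)) (A ^ j) := by
    have h0 : aeval C p = 0 := hC
    rw [aeval_eq_sum_range, ← hd] at h0
    rw [← h0]
    refine Finset.sum_congr rfl fun n hn => ?_
    rw [hCn, Finset.smul_sum]
    have hsub : Finset.range (n + 1) ⊆ Finset.range (d + 1) := by
      apply Finset.range_subset_range.mpr
      have := Finset.mem_range.mp hn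
      omega
    rw [← Finset.sum_subset hsub]
    · refine Finset.sum_congr rfl fun j hj => ?_
      rw [smul_smul]
    · intro j hj hj'
      have h1 := Finset.mem_range.mp hj
      have h2 : ¬ j < n + 1 := fun h => hj' (Finset.mem_range.mpr h)
      have : n < j := by omega
      rw [Nat.choose_eq_zero_of_lt this]
      simp
  set B : ℕ → Module.End k V := fun j =>
    ∑ n ∈ Finset.range (d + 1), (p.coeff n * (n.choose j : k)) • A ^ (n - j) with hB
  have hms : ∀ (s : Finset ℕ) (F : ℕ → Module.End k V) (G : Module.End k V),
      TensorProduct.map (∑ n ∈ s, F n) G = ∑ n ∈ s, TensorProduct.map (F n) G := by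
    intro s F G
    have h := map_sum ((TensorProduct.mapBilinear (RingHom.id k) V V V V).flip G) F s
    simp only [TensorProduct.mapBilinear_apply, LinearMap.flip_apply] at h
    exact h
  have hmain : (0 : Module.End k (V ⊗[k] V)) =
      ∑ j ∈ Finset.range (d + 1), TensorProduct.map (B j) (A ^ j) := by
    rw [hsum0, Finset.sum_comm]
    refine Finset.sum_congr rfl fun j hj => ?_
    simp only [hB]
    rw [hms]
    refine Finset.sum_congr rfl fun n hn => ?_
    rw [TensorProduct.map_smul_left]
  have hBd : B d = 1 := by
    simp only [hB]
    rw [Finset.sum_eq_single d]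
    · simp [hd, hmon.coeff_natDegree]
    · intro n hn hne
      have hlt : n < d := by
        have := Finset.mem_range.mp hn
        omega
      rw [Nat.choose_eq_zero_of_lt hlt]
      simp
    · intro h
      exact absurd (Finset.self_mem_range_succ d) h
  have hcoeffs : ∀ (f : Module.Dual k V) (u : V) (j : ℕ), j < d + 1 →
      f (B j u) = f u * p.coeff j := by
    intro f u j hj
    set Ff : V ⊗[k] V →ₗ[k] V := TensorProduct.lift ((LinearMap.lsmul k V).comp f) with hFf
    have hFtmul : ∀ (a b : V), Ff (a ⊗ₜ[k] b) = f a • b := fun a b => rfl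
    have hop : ∀ v : V, ∑ i ∈ Finset.range (d + 1), f (B i u) • (A ^ i) v = 0 := by
      intro v
      have h1 := congrArg (fun (T : Module.End k (V ⊗[k] V)) => Ff (T (u ⊗ₜ[k] v))) hmain
      simp only [LinearMap.zero_apply, map_zero, LinearMap.sum_apply, map_sum,
        TensorProduct.map_tmul, hFtmul] at h1
      exact h1.symm
    set q : Polynomial k := ∑ i ∈ Finset.range (d + 1), Polynomial.C (f (B i u)) * X ^ i with hq
    have haq : aeval A q = 0 := by
      apply LinearMap.ext
      intro v
      have h2 : (aeval A q) v = ∑ i ∈ Finset.range (d + 1), f (B i u) • (A ^ i) v := by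
        rw [hq, map_sum]
        simp [Algebra.smul_def]
      rw [h2, hop v, LinearMap.zero_apply]
    have hqco : ∀ i, q.coeff i = if i < d + 1 then f (B i u) else 0 := by
      intro i
      rw [hq, Polynomial.finset_sum_coeff]
      simp [Polynomial.coeff_C_mul, Polynomial.coeff_X_pow, Finset.mem_range]
    have hq'0 : q - Polynomial.C (f u) * p = 0 := by
      by_contra hne
      have haq' : aeval A (q - Polynomial.C (f u) * p) = 0 := by
        rw [map_sub, haq, map_mul, aeval_C, hp, minpoly.aeval, mul_zero, sub_zero]
      have hle := minpoly.degree_le_of_ne_zero k A hne haq'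
      have hlt : (q - Polynomial.C (f u) * p).degree < p.degree := by
        rw [Polynomial.degree_eq_natDegree hpne, ← hd, Polynomial.degree_lt_iff_coeff_zero]
        intro m hm
        rcases eq_or_lt_of_le hm with hm1 | hm2
        · subst hm1
          rw [Polynomial.coeff_sub, hqco, if_pos (by omega : d < d + 1), hBd,
            Polynomial.coeff_C_mul, hd, hmon.coeff_natDegree, mul_one]
          simp
        · rw [Polynomial.coeff_sub, hqco, Polynomial.coeff_C_mul,
            Polynomial.coeff_eq_zero_of_natDegree_lt (by omega : p.natDegree < m),
            if_neg (by omega), mul_zero, sub_zero]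
      exact absurd hle (not_le.mpr hlt)
    have hqeq : q = Polynomial.C (f u) * p := sub_eq_zero.mp hq'0
    have h3 := congrArg (fun r : Polynomial k => r.coeff j) hqeq
    simp only [Polynomial.coeff_C_mul] at h3
    rw [hqco, if_pos hj] at h3
    exact h3
  have hB0 : B 0 = 0 := by
    have h4 : B 0 = aeval A p := by
      simp only [hB]
      rw [aeval_eq_sum_range, ← hd]
      refine Finset.sum_congr rfl fun n hn => ?_
      simp
    rw [h4, hp, minpoly.aeval]
  have hp0 : p.coeff 0 = 0 := by
    obtain ⟨u, hu⟩ := exists_ne (0 : V)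
    by_contra hne
    have hfu : ∀ f : Module.Dual k V, f u = 0 := by
      intro f
      have h := hcoeffs f u 0 (by omega)
      rw [hB0] at h
      simp only [LinearMap.zero_apply, map_zero] at h
      rcases mul_eq_zero.mp h.symm with h1 | h2
      · exact h1
      · exact absurd h2 hne
    exact hu ((Module.forall_dual_apply_eq_zero_iff k u).mp hfu)
  have hB1 : B 1 = p.coeff 1 • (1 : Module.End k V) := by
    apply LinearMap.ext
    intro u
    have hfu : ∀ f : Module.Dual k V, f ((B 1) u - p.coeff 1 • u) = 0 := by
      intro f
      rw [map_sub, map_smul, hcoeffs f u 1 (by omega), smul_eq_mul, mul_comm, sub_self]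
    have h0 := (Module.forall_dual_apply_eq_zero_iff k _).mp hfu
    rw [sub_eq_zero] at h0
    simpa using h0
  have hder : aeval A (derivative p) = B 1 := by
    rw [aeval_eq_sum_range' (n := d + 1)
      (lt_of_le_of_lt (Polynomial.natDegree_derivative_le p) (by omega))]
    have hcd : (derivative p).coeff d = 0 := by
      rw [Polynomial.coeff_derivative, Polynomial.coeff_eq_zero_of_natDegree_lt (by omega)]
      ring
    rw [Finset.sum_range_succ, hcd, zero_smul, add_zero]
    simp only [hB]
    rw [Finset.sum_range_succ']
    have h00 : (p.coeff 0 * (((0 : ℕ).choose 1 : ℕ) : k)) • A ^ (0 - 1) = 0 := by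
      simp
    rw [h00, add_zero]
    refine Finset.sum_congr rfl fun i hi => ?_
    rw [Polynomial.coeff_derivative, Nat.choose_one_right, Nat.succ_sub_one]
    congr 1
    push_cast
    ring
  rcases eq_or_lt_of_le hd1 with hd1' | hd2
  · have hpX : p = X := by
      have h1 : p = X + Polynomial.C (p.coeff 0) := hmon.eq_X_add_C (by omega)
      rw [hp0, map_zero, add_zero] at h1
      exact h1
    have h5 : aeval A p = A := by rw [hpX, aeval_X]
    rw [← h5, hp, minpoly.aeval]
  · exfalso
    have har : aeval A (derivative p - Polynomial.C (p.coeff 1)) = 0 := by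
      rw [map_sub, hder, hB1, aeval_C, Algebra.algebraMap_eq_smul_one, sub_self]
    have hrne : derivative p - Polynomial.C (p.coeff 1) ≠ 0 := by
      intro h0
      obtain ⟨e, he⟩ : ∃ e, d = e + 1 := ⟨d - 1, by omega⟩
      have hc := congrArg (fun r : Polynomial k => r.coeff e) h0
      simp only [Polynomial.coeff_sub, Polynomial.coeff_derivative, Polynomial.coeff_C,
        Polynomial.coeff_zero] at hc
      rw [if_neg (by omega : ¬ e = 0), sub_zero, ← he, hd, hmon.coeff_natDegree, one_mul] at hc
      have h6 : ((e + 1 : ℕ) : k) = 0 := by push_cast; exact hc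
      have h7 : e + 1 = 0 := Nat.cast_eq_zero.mp h6
      omega
    have hle := minpoly.degree_le_of_ne_zero k A hrne har
    have hlt : (derivative p - Polynomial.C (p.coeff 1)).degree < p.degree := by
      rw [Polynomial.degree_eq_natDegree hpne, ← hd, Polynomial.degree_lt_iff_coeff_zero]
      intro m hm
      rw [Polynomial.coeff_sub, Polynomial.coeff_derivative,
        Polynomial.coeff_eq_zero_of_natDegree_lt (by omega : p.natDegree < m + 1),
        Polynomial.coeff_C, if_neg (by omega : ¬ m = 0)]
      ring
    exact absurd hle (not_le.mpr hlt)


end Glue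

/-- Let `g` be a finite-dimensional semisimple Lie algebra over a field of characteristic zero
and `V` a finite-dimensional representation of `g`.  If the category of subquotients of direct
sums of copies of `V` is stable under tensor products, then `g` acts trivially on `V`. -/
theorem trivial_of_tensor_stable
    (k : Type) [Field k] [CharZero k]
    (g : Type) [LieRing g] [LieAlgebra k g] [FiniteDimensional k g]
    [LieAlgebra.HasTrivialRadical k g]
    (V : Type) [AddCommGroup V] [Module k V] [LieRingModule g V] [LieModule k g V]
    [FiniteDimensional k V]
    (hstable : ∀ (W₁ W₂ : Type) [AddCommGroup W₁] [Module k W₁] [LieRingModule g W₁]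
      [LieModule k g W₁] [AddCommGroup W₂] [Module k W₂] [LieRingModule g W₂] [LieModule k g W₂],
      IsSubquotientOfCopies k g V W₁ → IsSubquotientOfCopies k g V W₂ →
        IsSubquotientOfCopies k g V (W₁ ⊗[k] W₂)) :
    ∀ (x : g) (v : V), ⁅x, v⁆ = 0 := by
  intro x v
  rcases subsingleton_or_nontrivial V with hV | hV
  · exact Subsingleton.elim _ _
  · set A := LieModule.toEnd k g V x with hA
    have hself : IsSubquotientOfCopies k g V V := isSubquotientOfCopies_self
    have hVV := hstable V V hself hself
    have htr := aeval_toEnd_subquotient hVV x (minpoly k A) (minpoly.aeval k A)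
    have hCeq : LieModule.toEnd k g (V ⊗[k] V) x
        = TensorProduct.map A (1 : Module.End k V) + TensorProduct.map (1 : Module.End k V) A := by
      apply TensorProduct.ext'
      intro a b
      simp [LieModule.toEnd_apply_apply, TensorProduct.LieModule.lie_tmul_right, hA]
    rw [hCeq] at htr
    have hA0 : A = 0 := heart A htr
    have h9 : ⁅x, v⁆ = A v := rfl
    rw [h9, hA0, LinearMap.zero_apply]
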